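/- arXiv:cs/0607055 — 3 statements merged into one kernel-verified Lean document; each statement's English description precedes it below -/
import Mathlib

section
/- Let G be a connected chordal graph and let S be a minimal vertex separator of G that is minimal in the set of all minimal vertex separators with respect to inclusion. Let Γ_1, ..., Γ_M be the connected components of G(V \ S). Then the set of maximal cliques of G is the disjoint union over m of the sets of maximal cliques of the induced subgraphs G(Γ_m ∪ S). -/
/-!
Since `S` is inclusion-minimal among the minimal separators, every component `Γ` of `G - S` is
full: each vertex of `S` has a neighbour in `Γ` (otherwise the vertices of `S` seen from `Γ`
would contain a smaller minimal separator). In a chordal graph a finite clique all of whose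
vertices see a connected set `Γ` has a common neighbour in `Γ`, so a maximal clique of
`G(Γ ∪ S)` cannot lie inside `S`. It therefore meets `Γ`, which pins down the component, and a
clique meeting `Γ` lies in `Γ ∪ S`, so maximality in `G(Γ ∪ S)` and in `G` agree.
-/

namespace Chordal

variable {V : Type*} [Fintype V]

/-- A closed walk has a chord: an edge of `G` joining two support vertices that is
not an edge of the walk. -/
def HasChord (G : SimpleGraph V) {u : V} (c : G.Walk u u) : Prop :=
  ∃ v w, v ∈ c.support ∧ w ∈ c.support ∧ G.Adj v w ∧ s(v, w) ∉ c.edges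

/-- A graph is chordal if every cycle of length at least 4 has a chord. -/
def IsChordal (G : SimpleGraph V) : Prop :=
  ∀ ⦃u : V⦄ (c : G.Walk u u), c.IsCycle → 4 ≤ c.length → HasChord G c

/-- A maximal clique of `G`. -/
def IsMaxClique (G : SimpleGraph V) (s : Set V) : Prop :=
  G.IsClique s ∧ ∀ t : Set V, G.IsClique t → s ⊆ t → s = t

/-- A maximal clique of the induced subgraph `G(W)`. -/
def IsMaxCliqueOn (G : SimpleGraph V) (W s : Set V) : Prop :=
  s ⊆ W ∧ G.IsClique s ∧ ∀ t : Set V, t ⊆ W → G.IsClique t → s ⊆ t → s = t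

/-- There is a walk from `u` to `w` staying inside `W` and avoiding `S`. -/
def ReachWithin (G : SimpleGraph V) (W S : Set V) (u w : V) : Prop :=
  ∃ p : G.Walk u w, ∀ x ∈ p.support, x ∈ W ∧ x ∉ S

/-- `S` separates `u` from `w` in the induced subgraph `G(W)`. -/
def SeparatesOn (G : SimpleGraph V) (W S : Set V) (u w : V) : Prop :=
  u ∈ W ∧ w ∈ W ∧ u ∉ S ∧ w ∉ S ∧ u ≠ w ∧ ¬ ReachWithin G W S u w

/-- `S` is a minimal vertex separator of the induced subgraph `G(W)`:
for some pair `u, w` it is an inclusion-minimal set separating `u` from `w`. -/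
def IsMinSeparatorOn (G : SimpleGraph V) (W S : Set V) : Prop :=
  S ⊆ W ∧ ∃ u w, SeparatesOn G W S u w ∧ ∀ S' ⊂ S, ¬ SeparatesOn G W S' u w

/-- `S` is a minimal vertex separator of `G`. -/
def IsMinSeparator (G : SimpleGraph V) (S : Set V) : Prop :=
  IsMinSeparatorOn G Set.univ S

/-- `S` is inclusion-minimal among the minimal vertex separators of `G`. -/
def IsInclMinSeparator (G : SimpleGraph V) (S : Set V) : Prop :=
  IsMinSeparator G S ∧ ∀ S' : Set V, IsMinSeparator G S' → S' ⊆ S → S' = S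

/-- `Γ` is a connected component of `G(V \ S)`. -/
def IsCompOutside (G : SimpleGraph V) (S Γ : Set V) : Prop :=
  ∃ u, u ∉ S ∧ Γ = {w | ReachWithin G Set.univ S u w}

/-- A vertex is simplicial if its neighborhood is a clique. -/
def IsSimplicial (G : SimpleGraph V) (v : V) : Prop :=
  G.IsClique (G.neighborSet v)

/-- The simplicial component of a clique `C`: the simplicial vertices of `G` in `C`. -/
def Simp (G : SimpleGraph V) (C : Set V) : Set V :=
  {v ∈ C | IsSimplicial G v}

/-- The non-simplicial component of a clique `C`. -/
def Sep (G : SimpleGraph V) (C : Set V) : Set V :=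
  C \ Simp G C

/-- `C` is a boundary clique (simply separated clique): a maximal clique such that
`Sep C = C ∩ C'` for some other maximal clique `C'`. -/
def IsBoundaryClique (G : SimpleGraph V) (C : Set V) : Prop :=
  IsMaxClique G C ∧ ∃ C' : Set V, IsMaxClique G C' ∧ C' ≠ C ∧ Sep G C = C ∩ C'

/-- The induced subgraph on `W`, kept on the same vertex type. -/
def restrictS (G : SimpleGraph V) (W : Set V) : SimpleGraph V where
  Adj u v := G.Adj u v ∧ u ∈ W ∧ v ∈ W
  symm := ⟨fun u v ⟨h, hu, hv⟩ => ⟨h.symm, hv, hu⟩⟩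
  loopless := ⟨fun u ⟨h, _, _⟩ => G.loopless.irrefl u h⟩

/-- The vertex subset `A` induces a connected subgraph of `T`. -/
def ConnOn {α : Type*} (T : SimpleGraph α) (A : Set α) : Prop :=
  A.Nonempty ∧ ∀ u ∈ A, ∀ v ∈ A, ∃ p : T.Walk u v, ∀ x ∈ p.support, x ∈ A

/-- The induced subgraph `G(W)` is complete. -/
def CompleteOn (G : SimpleGraph V) (W : Set V) : Prop :=
  ∀ u ∈ W, ∀ v ∈ W, u ≠ v → G.Adj u v

/-- A clique tree of `G`: a tree on the maximal cliques of `G` satisfying the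
junction property. -/
def IsCliqueTree (G : SimpleGraph V) (T : SimpleGraph {s : Set V // IsMaxClique G s}) : Prop :=
  T.IsTree ∧ ∀ (C₁ C₂ : {s : Set V // IsMaxClique G s}) (p : T.Walk C₁ C₂), p.IsPath →
    ∀ C₃ ∈ p.support, C₁.val ∩ C₂.val ⊆ C₃.val

/-- A leaf (endpoint) of a graph: a vertex with exactly one neighbor. -/
def IsLeaf {α : Type*} (T : SimpleGraph α) (a : α) : Prop :=
  ∃! b, T.Adj a b

/-- The union of the cliques preceding position `k` in a sequence. -/
def prefUnion {K : ℕ} (f : Fin K → Set V) (k : Fin K) : Set V :=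
  {v | ∃ j, j < k ∧ v ∈ f j}

/-- A perfect sequence of the maximal cliques of the induced subgraph `G(W)`:
an enumeration of the maximal cliques of `G(W)` with the running intersection property. -/
def IsPerfectSeqOn (G : SimpleGraph V) (W : Set V) {K : ℕ} (f : Fin K → Set V) : Prop :=
  Function.Injective f ∧ (∀ s : Set V, IsMaxCliqueOn G W s ↔ ∃ k, f k = s) ∧
  ∀ k : Fin K, 0 < (k : ℕ) →
    G.IsClique (prefUnion f k ∩ f k) ∧ ∃ k' : Fin K, k' < k ∧ prefUnion f k ∩ f k ⊆ f k'

/-- A perfect sequence of the maximal cliques of `G`. -/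
def IsPerfectSeq (G : SimpleGraph V) {K : ℕ} (f : Fin K → Set V) : Prop :=
  Function.Injective f ∧ (∀ s : Set V, IsMaxClique G s ↔ ∃ k, f k = s) ∧
  ∀ k : Fin K, 0 < (k : ℕ) →
    G.IsClique (prefUnion f k ∩ f k) ∧ ∃ k' : Fin K, k' < k ∧ prefUnion f k ∩ f k ⊆ f k'

/-- The closed neighborhood of a vertex. -/
def closedNbhd (G : SimpleGraph V) (v : V) : Set V :=
  insert v (G.neighborSet v)

end Chordal

namespace SimpleGraph.Walk

variable {V : Type*} {G : SimpleGraph V} {u v w x y : V}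

lemma IsPath.eq_of_mem_support_append {p : G.Walk u v} {q : G.Walk v w}
    (hpq : (p.append q).IsPath) (hp : x ∈ p.support) (hq : x ∈ q.support) : x = v := by
  by_contra hxv
  exact hpq.ne_of_mem_support_of_append hxv hp hq rfl

lemma IsChordless.of_append_left {p : G.Walk u v} {q : G.Walk v w}
    (hpq : (p.append q).IsPath) (h : (p.append q).IsChordless) : p.IsChordless := by
  refine isChordless_iff_forall_mem_edges.mpr fun x y hx hy hxy => ?_
  have hmem := h.mem_edges (p.support_subset_support_append_left q hx)
    (p.support_subset_support_append_left q hy) hxy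
  rw [edges_append, List.mem_append] at hmem
  refine hmem.resolve_right fun hq => hxy.ne ?_
  rw [hpq.eq_of_mem_support_append hx (q.fst_mem_support_of_mem_edges hq),
    hpq.eq_of_mem_support_append hy (q.snd_mem_support_of_mem_edges hq)]

lemma IsChordless.of_append_right {p : G.Walk u v} {q : G.Walk v w}
    (hpq : (p.append q).IsPath) (h : (p.append q).IsChordless) : q.IsChordless := by
  refine isChordless_iff_forall_mem_edges.mpr fun x y hx hy hxy => ?_
  have hmem := h.mem_edges (p.support_subset_support_append_right q hx)
    (p.support_subset_support_append_right q hy) hxy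
  rw [edges_append, List.mem_append] at hmem
  refine hmem.resolve_left fun hp => hxy.ne ?_
  rw [hpq.eq_of_mem_support_append (p.fst_mem_support_of_mem_edges hp) hx,
    hpq.eq_of_mem_support_append (p.snd_mem_support_of_mem_edges hp) hy]

lemma two_le_length_of_adj_of_notMem_edges (p : G.Walk u v) (h : G.Adj u v)
    (hp : s(u, v) ∉ p.edges) : 2 ≤ p.length := by
  cases p with
  | nil => exact absurd h (G.loopless.irrefl u)
  | cons _ p' => cases p' with
    | nil => simp at hp
    | cons _ _ => simp

lemma exists_length_lt_of_not_isChordless {p : G.Walk u v} (hp : ¬ p.IsChordless) :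
    ∃ q : G.Walk u v, q.length < p.length ∧ q.support ⊆ p.support := by
  simp only [isChordless_iff_forall_mem_edges, not_forall] at hp
  obtain ⟨x, y, hx, hy, hxy, hchord⟩ := hp
  obtain ⟨p₁, p₂, rfl⟩ := mem_support_iff_exists_append.mp hx
  rcases (mem_support_append_iff p₁ p₂).mp hy with hy | hy
  · obtain ⟨q₁, q₂, rfl⟩ := mem_support_iff_exists_append.mp hy
    have := q₂.two_le_length_of_adj_of_notMem_edges hxy.symm
      (by rw [Sym2.eq_swap]; simp_all [edges_append])
    refine ⟨q₁.append (cons hxy.symm p₂), by simp only [length_append, length_cons]; omega, fun z hz => ?_⟩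
    simp only [mem_support_append_iff, support_cons, List.mem_cons] at hz ⊢
    rcases hz with hz | rfl | hz <;> simp [*]
  · obtain ⟨q₁, q₂, rfl⟩ := mem_support_iff_exists_append.mp hy
    have := q₁.two_le_length_of_adj_of_notMem_edges hxy (by simp_all [edges_append])
    refine ⟨p₁.append (cons hxy q₂), by simp only [length_append, length_cons]; omega, fun z hz => ?_⟩
    simp only [mem_support_append_iff, support_cons, List.mem_cons] at hz ⊢
    rcases hz with hz | rfl | hz <;> simp [*]

/-- A shortest walk from `u` to `v` through the vertices of `p` is a chordless path. -/
theorem exists_isPath_isChordless_support_subset (p : G.Walk u v) :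
    ∃ q : G.Walk u v, q.IsPath ∧ q.IsChordless ∧ q.support ⊆ p.support := by
  classical
  have hex : ∃ n, ∃ q : G.Walk u v, q.support ⊆ p.support ∧ q.length = n :=
    ⟨_, p, List.Subset.refl _, rfl⟩
  obtain ⟨q, hqp, hq⟩ := Nat.find_spec hex
  refine ⟨q.bypass, q.bypass_isPath, ?_, fun z hz => hqp (q.support_bypass_subset_support hz)⟩
  by_contra hc
  obtain ⟨r, hr, hrq⟩ := exists_length_lt_of_not_isChordless hc
  have := Nat.find_min' hex ⟨r, fun z hz => hqp (q.support_bypass_subset_support (hrq hz)), rfl⟩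
  have := q.length_bypass_le_length
  omega

end SimpleGraph.Walk

namespace Chordal

open SimpleGraph Walk

variable {V : Type*} {G : SimpleGraph V}

/-- A chord of the cycle `t, a, …, b, t` cannot join two vertices of the chordless path, so it
joins `t` to an interior vertex. -/
theorem IsChordal.exists_adj_of_isChordless (hch : IsChordal G) {t a b : V} {p : G.Walk a b}
    (hp : p.IsPath) (hc : p.IsChordless) (ht : t ∉ p.support) (ha : G.Adj t a)
    (hb : G.Adj t b) (hlen : 2 ≤ p.length) :
    ∃ m ∈ p.support, G.Adj t m ∧ m ≠ a ∧ m ≠ b := by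
  have hab : a ≠ b := by
    rintro rfl
    simp [length_eq_zero_iff.mpr (isPath_iff_nil.mp hp)] at hlen
  set c : G.Walk t t := cons ha (p.concat hb.symm)
  have hcycle : c.IsCycle := by
    refine (cons_isCycle_iff _ ha).mpr ⟨hp.concat ht hb.symm, ?_⟩
    rw [edges_concat, List.concat_eq_append, List.mem_append, List.mem_singleton, not_or]
    refine ⟨fun h => ht (p.fst_mem_support_of_mem_edges h), fun h => ?_⟩
    rcases Sym2.eq_iff.mp h with ⟨rfl, -⟩ | ⟨-, h⟩
    exacts [ht p.end_mem_support, hab h]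
  have hlen4 : 4 ≤ c.length := by simp only [c, length_cons, length_concat]; omega
  obtain ⟨v, w, hv, hw, hvw, hvwc⟩ := hch c hcycle hlen4
  have hcsupp : ∀ z ∈ c.support, z = t ∨ z ∈ p.support := fun z hz => by
    simp only [c, support_cons, support_concat, List.mem_cons, List.mem_append] at hz
    tauto
  suffices key : ∀ m ∈ p.support, G.Adj t m → s(t, m) ∉ c.edges →
      ∃ m ∈ p.support, G.Adj t m ∧ m ≠ a ∧ m ≠ b by
    rcases hcsupp v hv with rfl | hvp <;> rcases hcsupp w hw with rfl | hwp
    · exact absurd hvw (G.loopless.irrefl _)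
    · exact key w hwp hvw hvwc
    · exact key v hvp hvw.symm (by rwa [Sym2.eq_swap])
    · exact absurd (by simp [c, hc.mem_edges hvp hwp hvw]) hvwc
  intro m hm htm hmc
  refine ⟨m, hm, htm, ?_, ?_⟩ <;> rintro rfl <;> simp [c, Sym2.eq_swap] at hmc

theorem IsChordal.adj_of_isChordless (hch : IsChordal G) {t a b : V} {p : G.Walk a b}
    (hp : p.IsPath) (hc : p.IsChordless) (ht : t ∉ p.support) (ha : G.Adj t a)
    (hb : G.Adj t b) : ∀ v ∈ p.support, G.Adj t v := by
  induction hn : p.length using Nat.strong_induction_on generalizing a b with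
  | _ n ih =>
  by_cases hlen : 2 ≤ p.length
  · obtain ⟨m, hm, htm, hma, hmb⟩ := hch.exists_adj_of_isChordless hp hc ht ha hb hlen
    obtain ⟨p₁, p₂, rfl⟩ := mem_support_iff_exists_append.mp hm
    have h₁ : p₁.length ≠ 0 := fun h => hma (p₁.eq_of_length_eq_zero h).symm
    have h₂ : p₂.length ≠ 0 := fun h => hmb (p₂.eq_of_length_eq_zero h)
    rw [length_append] at hn
    intro v hv
    rcases (mem_support_append_iff p₁ p₂).mp hv with hv | hv
    · exact ih _ (by omega) hp.of_append_left (hc.of_append_left hp)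
        (fun h => ht (p₁.support_subset_support_append_left p₂ h)) ha htm rfl v hv
    · exact ih _ (by omega) hp.of_append_right (hc.of_append_right hp)
        (fun h => ht (p₁.support_subset_support_append_right p₂ h)) htm hb rfl v hv
  · intro v hv
    cases p with
    | nil => simp_all
    | cons _ p' => cases p' with
      | nil =>
        simp only [support_cons, support_nil, List.mem_cons, List.not_mem_nil, or_false] at hv
        rcases hv with rfl | rfl <;> assumption
      | cons _ _ => simp at hlen

theorem IsChordal.exists_adj_forall_of_isClique (hch : IsChordal G) {Γ C : Set V}
    (hΓ : ConnOn G Γ) (hCfin : C.Finite) (hC : G.IsClique C) (hCΓ : ∀ c ∈ C, c ∉ Γ)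
    (hfull : ∀ c ∈ C, ∃ x ∈ Γ, G.Adj c x) : ∃ x ∈ Γ, ∀ c ∈ C, G.Adj x c := by
  induction C, hCfin using Set.Finite.induction_on with
  | empty => exact ⟨hΓ.1.some, hΓ.1.some_mem, by simp⟩
  | @insert s C₀ hs _ ih =>
  obtain ⟨x₀, hx₀, hx₀C₀⟩ := ih (hC.subset (Set.subset_insert s C₀))
    (fun c hc => hCΓ c (Set.mem_insert_of_mem s hc))
    (fun c hc => hfull c (Set.mem_insert_of_mem s hc))
  have hsΓ : s ∉ Γ := hCΓ s (Set.mem_insert s C₀)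
  obtain ⟨y, hy, hsy⟩ := hfull s (Set.mem_insert s C₀)
  obtain ⟨p, hpΓ⟩ := hΓ.2 x₀ hx₀ y hy
  -- The last vertex before `s` on a chordless path from `x₀` to `s` through `Γ` sees all of `C₀`,
  -- since each vertex of `C₀` is adjacent to both ends of that path.
  obtain ⟨q, hq, hqc, hqp⟩ := exists_isPath_isChordless_support_subset (p.concat hsy.symm)
  have hqΓ : ∀ z ∈ q.support, z = s ∨ z ∈ Γ := fun z hz => by
    have := hqp hz
    rw [support_concat, List.mem_append, List.mem_singleton] at this
    exact this.symm.imp_right (hpΓ z)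
  have hqnil : ¬ q.Nil := fun h => hsΓ (h.eq ▸ hx₀)
  have hzs : G.Adj q.penultimate s := adj_penultimate hqnil
  have hzΓ : q.penultimate ∈ Γ := (hqΓ _ (q.getVert_mem_support _)).resolve_left hzs.ne
  refine ⟨q.penultimate, hzΓ, fun c hc => ?_⟩
  rcases Set.mem_insert_iff.mp hc with rfl | hc
  · exact hzs
  · have hcq : c ∉ q.support := fun h =>
      (hqΓ c h).elim (fun hcs => hs (hcs ▸ hc)) (hCΓ c (Set.mem_insert_of_mem s hc))
    have hcs : G.Adj c s := hC (Set.mem_insert_of_mem s hc) (Set.mem_insert s C₀)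
      (fun h => hs (h ▸ hc))
    exact (hch.adj_of_isChordless hq hqc hcq (hx₀C₀ c hc).symm hcs _
      (q.getVert_mem_support _)).symm

section Components

variable {W S Γ Γ' C : Set V} {u v w : V}

theorem reachWithin_refl (hu : u ∈ W) (huS : u ∉ S) : ReachWithin G W S u u :=
  ⟨nil, by simp [hu, huS]⟩

theorem ReachWithin.symm (h : ReachWithin G W S u v) : ReachWithin G W S v u := by
  obtain ⟨p, hp⟩ := h
  exact ⟨p.reverse, fun x hx => hp x (by rwa [support_reverse, List.mem_reverse] at hx)⟩

theorem ReachWithin.trans (h : ReachWithin G W S u v) (h' : ReachWithin G W S v w) :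
    ReachWithin G W S u w := by
  obtain ⟨p, hp⟩ := h
  obtain ⟨q, hq⟩ := h'
  exact ⟨p.append q, fun x hx => ((mem_support_append_iff p q).mp hx).elim (hp x) (hq x)⟩

theorem ReachWithin.notMem_right (h : ReachWithin G W S u v) : v ∉ S :=
  let ⟨p, hp⟩ := h
  (hp v p.end_mem_support).2

theorem reachWithin_of_mem_support [DecidableEq V] {p : G.Walk u w}
    (hp : ∀ x ∈ p.support, x ∈ W ∧ x ∉ S) (hv : v ∈ p.support) : ReachWithin G W S u v :=
  ⟨p.takeUntil v hv, fun x hx => hp x (p.support_takeUntil_subset_support hv hx)⟩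

theorem isCompOutside_setOf (hu : u ∉ S) :
    IsCompOutside G S {w | ReachWithin G Set.univ S u w} :=
  ⟨u, hu, rfl⟩

namespace IsCompOutside

theorem notMem (hΓ : IsCompOutside G S Γ) (hv : v ∈ Γ) : v ∉ S := by
  obtain ⟨a, -, rfl⟩ := hΓ
  exact ReachWithin.notMem_right hv

theorem reachWithin (hΓ : IsCompOutside G S Γ) (hv : v ∈ Γ) (hw : w ∈ Γ) :
    ReachWithin G Set.univ S v w := by
  obtain ⟨a, -, rfl⟩ := hΓ
  exact ReachWithin.trans (ReachWithin.symm hv) hw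

theorem mem_of_adj (hΓ : IsCompOutside G S Γ) (hv : v ∈ Γ) (hvw : G.Adj v w) (hw : w ∉ S) :
    w ∈ Γ := by
  obtain ⟨a, -, rfl⟩ := hΓ
  refine ReachWithin.trans hv ⟨hvw.toWalk, fun x hx => ?_⟩
  rcases (by simpa using hx : x = v ∨ x = w) with rfl | rfl
  exacts [⟨trivial, ReachWithin.notMem_right hv⟩, ⟨trivial, hw⟩]

theorem connOn (hΓ : IsCompOutside G S Γ) : ConnOn G Γ := by
  classical
  obtain ⟨a, ha, rfl⟩ := hΓ
  refine ⟨⟨a, reachWithin_refl trivial ha⟩, fun v hv w hw => ?_⟩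
  obtain ⟨p, hp⟩ := ReachWithin.trans (ReachWithin.symm hv) hw
  exact ⟨p, fun x hx => ReachWithin.trans hv (reachWithin_of_mem_support hp hx)⟩

theorem eq_of_mem (hΓ : IsCompOutside G S Γ) (hΓ' : IsCompOutside G S Γ') (hv : v ∈ Γ)
    (hv' : v ∈ Γ') : Γ = Γ' := by
  obtain ⟨a, -, rfl⟩ := hΓ
  obtain ⟨b, -, rfl⟩ := hΓ'
  ext x
  exact ⟨fun hx => hv'.trans (hv.symm.trans hx), fun hx => hv.trans (hv'.symm.trans hx)⟩

theorem mem_of_walk (hΓ : IsCompOutside G S Γ) (p : G.Walk v w) (hv : v ∈ Γ)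
    (hp : ∀ z ∈ p.support, z ∈ S → ∀ x ∈ Γ, ¬ G.Adj z x) : w ∈ Γ := by
  induction p with
  | nil => exact hv
  | @cons v v' w hvv' p ih =>
    have hv'S : v' ∉ S := fun h => hp v' (by simp) h v hv hvv'.symm
    exact ih (hΓ.mem_of_adj hv hvv' hv'S) fun z hz => hp z (by simp [hz])

end IsCompOutside

theorem exists_isMinSeparator_subset [Finite V] {A : Set V} (h : SeparatesOn G Set.univ A u v) :
    ∃ B ⊆ A, IsMinSeparator G B := by
  obtain ⟨B, hBA, hB⟩ := exists_minimal_le_of_wellFoundedLT (SeparatesOn G Set.univ · u v) A h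
  exact ⟨B, hBA, Set.subset_univ B, u, v, hB.prop, fun B' hB' => hB.not_prop_of_lt hB'⟩

/-- The vertices of `S` adjacent to `Γ` separate `Γ` from the rest of `G - S`, hence contain a
minimal separator, which must be all of `S`. -/
theorem IsCompOutside.exists_adj_of_mem [Finite V] (hS : IsInclMinSeparator G S)
    (hΓ : IsCompOutside G S Γ) {s : V} (hs : s ∈ S) : ∃ x ∈ Γ, G.Adj s x := by
  obtain ⟨-, u, w, ⟨-, -, hu, hw, -, huw⟩, -⟩ := hS.1
  obtain ⟨y, hyΓ, hyS⟩ : ∃ y ∉ Γ, y ∉ S := by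
    by_cases huΓ : u ∈ Γ
    · exact ⟨w, fun hwΓ => huw (hΓ.reachWithin huΓ hwΓ), hw⟩
    · exact ⟨u, huΓ, hu⟩
  obtain ⟨a, haΓ⟩ := hΓ.connOn.1
  have ha : a ∉ S := hΓ.notMem haΓ
  have hsep : SeparatesOn G Set.univ {v ∈ S | ∃ x ∈ Γ, G.Adj v x} a y := by
    refine ⟨trivial, trivial, fun h => ha h.1, fun h => hyS h.1, fun h => hyΓ (h ▸ haΓ), ?_⟩
    rintro ⟨p, hp⟩
    exact hyΓ (hΓ.mem_of_walk p haΓ fun z hz hzS x hx hzx => (hp z hz).2 ⟨hzS, x, hx, hzx⟩)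
  obtain ⟨B, hBN, hB⟩ := exists_isMinSeparator_subset hsep
  exact (hBN ((hS.2 B hB fun v hv => (hBN hv).1) ▸ hs)).2

theorem IsCompOutside.subset_union_of_isClique (hΓ : IsCompOutside G S Γ) (hC : G.IsClique C)
    {c : V} (hcC : c ∈ C) (hcΓ : c ∈ Γ) : C ⊆ Γ ∪ S := by
  intro v hv
  by_cases hvS : v ∈ S
  · exact Or.inr hvS
  by_cases hvc : v = c
  · exact Or.inl (hvc ▸ hcΓ)
  · exact Or.inl (hΓ.mem_of_adj hcΓ (hC hcC hv (Ne.symm hvc)) hvS)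

theorem exists_isCompOutside_subset_union (hu : u ∉ S) (hC : G.IsClique C) :
    ∃ Γ, IsCompOutside G S Γ ∧ C ⊆ Γ ∪ S := by
  by_cases hCS : C ⊆ S
  · exact ⟨_, isCompOutside_setOf hu, hCS.trans Set.subset_union_right⟩
  obtain ⟨c, hcC, hcS⟩ := Set.not_subset.mp hCS
  have hΓ := isCompOutside_setOf (G := G) hcS
  exact ⟨_, hΓ, hΓ.subset_union_of_isClique hC hcC (reachWithin_refl trivial hcS)⟩

theorem IsMaxClique.isMaxCliqueOn (hC : IsMaxClique G C) (hCW : C ⊆ W) :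
    IsMaxCliqueOn G W C :=
  ⟨hCW, hC.1, fun t _ ht hCt => hC.2 t ht hCt⟩

theorem IsCompOutside.isMaxClique_of_isMaxCliqueOn (hΓ : IsCompOutside G S Γ)
    (hC : IsMaxCliqueOn G (Γ ∪ S) C) {c : V} (hcC : c ∈ C) (hcΓ : c ∈ Γ) : IsMaxClique G C :=
  ⟨hC.2.1, fun t ht hCt => hC.2.2 t (hΓ.subset_union_of_isClique ht (hCt hcC) hcΓ) ht hCt⟩

/-- A maximal clique of `G(Γ ∪ S)` inside `S` would have a common neighbour in `Γ`. -/
theorem IsCompOutside.exists_mem_of_isMaxCliqueOn [Finite V] (hch : IsChordal G)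
    (hS : IsInclMinSeparator G S) (hΓ : IsCompOutside G S Γ) (hC : IsMaxCliqueOn G (Γ ∪ S) C) :
    ∃ c ∈ C, c ∈ Γ := by
  by_contra! hCΓ
  have hCS : C ⊆ S := fun c hc => (hC.1 hc).resolve_left (hCΓ c hc)
  obtain ⟨x, hxΓ, hxC⟩ := hch.exists_adj_forall_of_isClique hΓ.connOn C.toFinite hC.2.1 hCΓ
    fun c hc => hΓ.exists_adj_of_mem hS (hCS hc)
  have hxC' : C = insert x C := hC.2.2 _ (Set.insert_subset (Or.inl hxΓ) hC.1)
    (hC.2.1.insert fun c hc _ => hxC c hc) (Set.subset_insert x C)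
  exact hCΓ x (hxC' ▸ Set.mem_insert x C) hxΓ

end Components

theorem maxcliques_disjoint_union_over_components_general {V : Type*} [Fintype V]
    (G : SimpleGraph V) (hch : IsChordal G)
    (S : Set V) (hS : IsInclMinSeparator G S) :
    (∀ C : Set V, IsMaxClique G C ↔
      ∃ Γ : Set V, IsCompOutside G S Γ ∧ IsMaxCliqueOn G (Γ ∪ S) C) ∧
    (∀ (C Γ Γ' : Set V), IsCompOutside G S Γ → IsCompOutside G S Γ' →
      IsMaxCliqueOn G (Γ ∪ S) C → IsMaxCliqueOn G (Γ' ∪ S) C → Γ = Γ') := by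
  obtain ⟨-, u, -, ⟨-, -, hu, -⟩, -⟩ := hS.1
  refine ⟨fun C => ⟨fun hC => ?_, fun ⟨Γ, hΓ, hC⟩ => ?_⟩, fun C Γ Γ' hΓ hΓ' hC hC' => ?_⟩
  · obtain ⟨Γ, hΓ, hCΓ⟩ := exists_isCompOutside_subset_union hu hC.1
    exact ⟨Γ, hΓ, hC.isMaxCliqueOn hCΓ⟩
  · obtain ⟨c, hcC, hcΓ⟩ := hΓ.exists_mem_of_isMaxCliqueOn hch hS hC
    exact hΓ.isMaxClique_of_isMaxCliqueOn hC hcC hcΓ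
  · obtain ⟨c, hcC, hcΓ⟩ := hΓ.exists_mem_of_isMaxCliqueOn hch hS hC
    exact hΓ.eq_of_mem hΓ' hcΓ ((hC'.1 hcC).resolve_right (hΓ.notMem hcΓ))

theorem maxcliques_disjoint_union_over_components {V : Type*} [Fintype V]
    (G : SimpleGraph V) (hconn : G.Connected) (hch : IsChordal G)
    (S : Set V) (hS : IsInclMinSeparator G S) :
    (∀ C : Set V, IsMaxClique G C ↔
      ∃ Γ : Set V, IsCompOutside G S Γ ∧ IsMaxCliqueOn G (Γ ∪ S) C) ∧
    (∀ (C Γ Γ' : Set V), IsCompOutside G S Γ → IsCompOutside G S Γ' →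
      IsMaxCliqueOn G (Γ ∪ S) C → IsMaxCliqueOn G (Γ' ∪ S) C → Γ = Γ') :=
  maxcliques_disjoint_union_over_components_general G hch S hS

end Chordal
end

section
/- Let G be a connected chordal graph and S a minimal vertex separator. If the induced subgraph on the union of the maximal cliques containing S has at least two minimal vertex separators, then S is properly contained in every minimal vertex separator S' ≠ S of that induced subgraph. -/
namespace Chordal

variable {V : Type*} {G : SimpleGraph V} {W S T : Set V}

theorem reachWithin_of_mem_clique {C : Set V} (hC : G.IsClique C) (hCW : C ⊆ W) {u v : V}
    (hu : u ∈ C) (hv : v ∈ C) (huT : u ∉ T) (hvT : v ∉ T) : ReachWithin G W T u v := by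
  by_cases huv : u = v
  · subst huv
    exact ⟨.nil, by simpa using ⟨hCW hu, huT⟩⟩
  · refine ⟨(hC hu hv huv).toWalk, fun x hx => ?_⟩
    simp only [SimpleGraph.Adj.toWalk, SimpleGraph.Walk.support_cons,
      SimpleGraph.Walk.support_nil, List.mem_cons, List.not_mem_nil, or_false] at hx
    rcases hx with rfl | rfl
    exacts [⟨hCW hu, huT⟩, ⟨hCW hv, hvT⟩]

theorem ReachWithin.trans_s6 {u v w : V} (huv : ReachWithin G W T u v)
    (hvw : ReachWithin G W T v w) : ReachWithin G W T u w := by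
  obtain ⟨p, hp⟩ := huv
  obtain ⟨q, hq⟩ := hvw
  refine ⟨p.append q, fun x hx => ?_⟩
  rcases (SimpleGraph.Walk.mem_support_append_iff p q).1 hx with hx | hx
  exacts [hp x hx, hq x hx]

/-- A vertex of `S` outside the separator `T` would be adjacent (or equal) to both separated
vertices, joining them. -/
theorem SeparatesOn.subset_of_forall_mem_clique {u w : V} (hsep : SeparatesOn G W T u w)
    (hS : ∀ v ∈ W, ∃ C ⊆ W, G.IsClique C ∧ S ⊆ C ∧ v ∈ C) : S ⊆ T := by
  obtain ⟨huW, hwW, huT, hwT, -, hnr⟩ := hsep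
  intro s hs
  by_contra hsT
  obtain ⟨Cu, hCuW, hCu, hSCu, huCu⟩ := hS u huW
  obtain ⟨Cw, hCwW, hCw, hSCw, hwCw⟩ := hS w hwW
  exact hnr <| (reachWithin_of_mem_clique hCu hCuW huCu (hSCu hs) huT hsT).trans_s6
    (reachWithin_of_mem_clique hCw hCwW (hSCw hs) hwCw hsT hwT)

theorem separator_ssubset_of_two_separators_general {V : Type*}
    (G : SimpleGraph V)
    (S : Set V) (W : Set V)
    (hW : W = {v | ∃ C : Set V, IsMaxClique G C ∧ S ⊂ C ∧ v ∈ C}) :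
    ∀ S' : Set V, IsMinSeparatorOn G W S' → S' ≠ S → S ⊂ S' := by
  rintro S' ⟨-, u, w, hsep, -⟩ hne
  refine (hsep.subset_of_forall_mem_clique fun v hv => ?_).ssubset_of_ne hne.symm
  obtain ⟨C, hC, hSC, hvC⟩ := hW ▸ hv
  exact ⟨C, fun x hx => hW ▸ ⟨C, hC, hSC, hx⟩, hC.1, hSC.subset, hvC⟩

theorem separator_ssubset_of_two_separators {V : Type*} [Fintype V]
    (G : SimpleGraph V) (hconn : G.Connected) (hch : IsChordal G)
    (S : Set V) (hS : IsMinSeparator G S) (W : Set V)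
    (hW : W = {v | ∃ C : Set V, IsMaxClique G C ∧ S ⊂ C ∧ v ∈ C})
    (h2 : ∃ S₁ S₂ : Set V, S₁ ≠ S₂ ∧ IsMinSeparatorOn G W S₁ ∧ IsMinSeparatorOn G W S₂) :
    ∀ S' : Set V, IsMinSeparatorOn G W S' → S' ≠ S → S ⊂ S' :=
  separator_ssubset_of_two_separators_general G S W hW

end Chordal
end

section
/- Let G be a connected chordal graph and C' ⊆ C(G) a subset of its maximal cliques with |C'| = k. There exists a clique tree T of G such that the subtree induced by C' is connected if and only if there exists a perfect sequence π of the maximal cliques of G whose first k cliques are exactly the elements of C'. -/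
namespace Chordal

variable {V : Type*} [Fintype V]

/-
If `𝒞` spans a subtree of a clique tree `T`, list the cliques so that `𝒞` comes first and every
later clique is adjacent in `T` to an earlier one (grow the subtree one neighbour at a time, first
inside `𝒞`, then in all of `T`). The earlier cliques then span a subtree, so the path from any
earlier clique to the next clique `C` enters `C` through its earlier neighbour `C'`; by the junction
property, `C` meets the union of its predecessors inside `C'`, which is the running intersection
property.

Conversely, given a perfect sequence, join every clique to one earlier clique that contains its
intersection with its predecessors. This graph has one edge fewer than vertices and is connected,
hence a tree, and each of its prefixes (in particular `𝒞`) spans a subtree. For a fixed vertex `v`,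
every clique containing `v` other than the first is joined to its parent, which contains `v` too; so
the cliques containing `v` span a subtree, and in a tree this is the junction property.
-/

section Trees

variable {α : Type*} {T : SimpleGraph α}

def IsGrowingSeq {ι : Type*} [Preorder ι] (T : SimpleGraph α) (g : ι → α) : Prop :=
  ∀ i j, i < j → ∃ i' < j, T.Adj (g j) (g i')

def HasJunctionProperty {β : Type*} (T : SimpleGraph α) (c : α → Set β) : Prop :=
  ∀ a b (p : T.Walk a b), p.IsPath → ∀ x ∈ p.support, c a ∩ c b ⊆ c x

lemma connOn_univ_iff : ConnOn T Set.univ ↔ T.Connected := by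
  refine ⟨fun ⟨⟨a, _⟩, h⟩ => (SimpleGraph.connected_iff T).2
    ⟨fun u v => ⟨(h u trivial v trivial).choose⟩, ⟨a⟩⟩, fun h => ?_⟩
  have := h.nonempty
  exact ⟨Set.univ_nonempty, fun u _ v _ => ⟨(h u v).some, fun _ _ => trivial⟩⟩

lemma connOn_image_of_forall_exists_adj {ι : Type*} [LinearOrder ι] [WellFoundedLT ι]
    (g : ι → α) {S : Set ι} (hS : S.Nonempty)
    (h : ∀ j ∈ S, ∀ i ∈ S, i < j → ∃ i' ∈ S, i' < j ∧ T.Adj (g j) (g i')) :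
    ConnOn T (g '' S) := by
  obtain ⟨m, hm, hmin⟩ := WellFounded.has_min wellFounded_lt S hS
  have to_min : ∀ j ∈ S, ∃ p : T.Walk (g j) (g m), ∀ x ∈ p.support, x ∈ g '' S := by
    intro j
    induction j using WellFoundedLT.induction with
    | _ j ih =>
      intro hj
      rcases eq_or_ne j m with rfl | hjm
      · exact ⟨.nil, by simpa using Set.mem_image_of_mem g hj⟩
      obtain ⟨i, hiS, hij, hadj⟩ :=
        h j hj m hm (lt_of_le_of_ne (not_lt.1 (hmin j hj)) hjm.symm)
      obtain ⟨p, hp⟩ := ih i hij hiS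
      refine ⟨.cons hadj p, fun x hx => ?_⟩
      rcases List.mem_cons.1 (SimpleGraph.Walk.support_cons hadj p ▸ hx) with rfl | hx
      · exact Set.mem_image_of_mem g hj
      · exact hp x hx
  refine ⟨hS.image g, ?_⟩
  rintro _ ⟨a, ha, rfl⟩ _ ⟨b, hb, rfl⟩
  obtain ⟨p, hp⟩ := to_min a ha
  obtain ⟨q, hq⟩ := to_min b hb
  refine ⟨p.append q.reverse, fun x hx => ?_⟩
  rw [SimpleGraph.Walk.mem_support_append_iff, SimpleGraph.Walk.support_reverse,
    List.mem_reverse] at hx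
  exact hx.elim (hp x) (hq x)

lemma IsGrowingSeq.connOn_image {ι : Type*} [LinearOrder ι] [WellFoundedLT ι] {g : ι → α}
    (hg : IsGrowingSeq T g) {S : Set ι} (hS : IsLowerSet S) (hne : S.Nonempty) :
    ConnOn T (g '' S) :=
  connOn_image_of_forall_exists_adj g hne fun j hj i _ hij =>
    let ⟨i', hi'j, hadj⟩ := hg i j hij
    ⟨i', hS hi'j.le hj, hi'j, hadj⟩

lemma hasJunctionProperty_of_isAcyclic {β : Type*} {c : α → Set β} (hT : T.IsAcyclic)
    (h : ∀ v a b, v ∈ c a → v ∈ c b → ∃ p : T.Walk a b, ∀ x ∈ p.support, v ∈ c x) :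
    HasJunctionProperty T c := by
  classical
  intro a b p hp x hx v ⟨ha, hb⟩
  obtain ⟨q, hq⟩ := h v a b ha hb
  obtain rfl : p = q.bypass :=
    congrArg Subtype.val ((hT.subsingleton_path a b).elim ⟨p, hp⟩ ⟨q.bypass, q.bypass_isPath⟩)
  exact hq x (q.support_bypass_subset_support hx)

def parentGraph {n : ℕ} (g : Fin n → α) (par : Fin n → Fin n) : SimpleGraph α :=
  SimpleGraph.fromEdgeSet ((fun j => s(g j, g (par j))) '' {j | par j < j})

section ParentGraph

variable {n : ℕ} {par : Fin n → Fin n}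

lemma parentGraph_adj {g : Fin n → α} (hg : g.Injective) {j : Fin n} (hj : par j < j) :
    (parentGraph g par).Adj (g j) (g (par j)) :=
  (SimpleGraph.fromEdgeSet_adj _).2 ⟨⟨j, hj, rfl⟩, hg.ne hj.ne'⟩

lemma isGrowingSeq_parentGraph {g : Fin n → α} (hg : g.Injective)
    (hpar : ∀ j : Fin n, 0 < (j : ℕ) → par j < j) : IsGrowingSeq (parentGraph g par) g :=
  fun _ j hij =>
    have hj := hpar j (lt_of_le_of_lt (Nat.zero_le _) hij)
    ⟨par j, hj, parentGraph_adj hg hj⟩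

lemma card_edgeSet_parentGraph_add_one {g : Fin n → α} (hg : g.Injective) (hn : 0 < n)
    (hpar : ∀ j : Fin n, 0 < (j : ℕ) → par j < j) :
    Nat.card (parentGraph g par).edgeSet + 1 = n := by
  have hnonroots : {j : Fin n | par j < j} = Set.univ \ {⟨0, hn⟩} := by
    ext j
    simp only [Set.mem_ofPred_eq, Set.mem_sdiff, Set.mem_univ, Set.mem_singleton_iff, true_and]
    refine ⟨fun h hj => ?_, fun hj => hpar j (Nat.pos_of_ne_zero fun h => hj (Fin.ext h))⟩
    subst hj
    exact Nat.not_lt_zero _ h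
  have hnodiag : (fun j => s(g j, g (par j))) '' {j | par j < j} \ Sym2.diagSet =
      (fun j => s(g j, g (par j))) '' {j | par j < j} := by
    refine sdiff_eq_left.2 (Set.disjoint_left.2 ?_)
    rintro _ ⟨j, hj, rfl⟩ hdiag
    exact hg.ne (ne_of_gt hj) (Sym2.mk_isDiag_iff.1 hdiag)
  have hinj : Set.InjOn (fun j => s(g j, g (par j))) {j | par j < j} := by
    intro i (hi : par i < i) j (hj : par j < j) hij
    rcases Sym2.eq_iff.1 hij with ⟨h, -⟩ | ⟨h₁, h₂⟩
    · exact hg h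
    · have hij : i < j := by rw [hg h₁]; exact hj
      have hji : j < i := by rw [← hg h₂]; exact hi
      exact absurd (hij.trans hji) (lt_irrefl _)
  rw [parentGraph, SimpleGraph.edgeSet_fromEdgeSet, hnodiag, Nat.card_coe_set_eq,
    hinj.ncard_image, hnonroots, Set.ncard_sdiff_singleton_add_one (Set.mem_univ _),
    Set.ncard_univ, Nat.card_fin]

lemma isTree_parentGraph (e : Fin n ≃ α) (hn : 0 < n)
    (hpar : ∀ j : Fin n, 0 < (j : ℕ) → par j < j) : (parentGraph e par).IsTree := by
  have : Nonempty (Fin n) := ⟨⟨0, hn⟩⟩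
  have : Finite α := .of_equiv _ e
  have hconn := (isGrowingSeq_parentGraph e.injective hpar).connOn_image isLowerSet_univ
    Set.univ_nonempty
  rw [Set.image_univ_of_surjective e.surjective, connOn_univ_iff] at hconn
  rw [SimpleGraph.isTree_iff_connected_and_card, Nat.card_congr e.symm, Nat.card_fin]
  exact ⟨hconn, card_edgeSet_parentGraph_add_one e.injective hn hpar⟩

end ParentGraph

lemma IsGrowingSeq.concat {L : List α} (hL : IsGrowingSeq T L.get) {x y : α} (hy : y ∈ L)
    (hxy : T.Adj x y) : IsGrowingSeq T (L ++ [x]).get := by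
  rintro ⟨i, hi⟩ ⟨j, hj⟩ (hij : i < j)
  rw [List.length_append, List.length_singleton] at hi hj
  rcases Nat.lt_succ_iff_lt_or_eq.1 hj with hj | rfl
  · obtain ⟨⟨i', hi'⟩, hi'j, hadj⟩ := hL ⟨i, by omega⟩ ⟨j, hj⟩ hij
    refine ⟨⟨i', by simp only [List.length_append, List.length_singleton]; omega⟩, hi'j, ?_⟩
    simpa [List.getElem_append_left hj, List.getElem_append_left hi'] using hadj
  · obtain ⟨i', hi', rfl⟩ := List.getElem_of_mem hy
    refine ⟨⟨i', by simp only [List.length_append, List.length_singleton]; omega⟩, hi', ?_⟩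
    simpa [List.getElem_append_left hi'] using hxy

lemma exists_append_isGrowingSeq [DecidableEq α] {B : Finset α} (hB : ConnOn T B) (L : List α)
    (hL : L ≠ []) (hnd : L.Nodup) (hgrow : IsGrowingSeq T L.get) (hLB : ∀ x ∈ L, x ∈ B) :
    ∃ M, (L ++ M).Nodup ∧ IsGrowingSeq T (L ++ M).get ∧ (L ++ M).toFinset = B := by
  by_cases hfull : L.toFinset = B
  · exact ⟨[], by simpa using hnd, (List.append_nil L).symm ▸ hgrow, by simpa using hfull⟩
  have hsub : L.toFinset ⊂ B :=
    Finset.ssubset_iff_subset_ne.2 ⟨fun x hx => hLB x (List.mem_toFinset.1 hx), hfull⟩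
  have hlen : L.length < B.card := List.toFinset_card_of_nodup hnd ▸ Finset.card_lt_card hsub
  obtain ⟨v, hvB, hvL⟩ := Finset.exists_of_ssubset hsub
  obtain ⟨p, hp⟩ := hB.2 _ (hLB _ (L.head_mem hL)) v hvB
  obtain ⟨d, hd, hdL, hdL'⟩ :=
    p.exists_boundary_dart {x | x ∈ L} (L.head_mem hL) (by simpa using hvL)
  obtain ⟨M, hM⟩ := exists_append_isGrowingSeq hB (L ++ [d.snd]) (by simp)
    (List.nodup_append.2 ⟨hnd, List.nodup_singleton _,
      by simpa using fun a (ha : a ∈ L) (h : a = d.snd) => hdL' (h ▸ ha)⟩)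
    (hgrow.concat hdL d.adj.symm)
    (by
      simp only [List.mem_append, List.mem_singleton]
      rintro x (hx | rfl)
      exacts [hLB x hx, hp _ (p.dart_snd_mem_support_of_mem_darts hd)])
  exact ⟨d.snd :: M, List.append_cons L d.snd M ▸ hM⟩
termination_by B.card - L.length
decreasing_by simp only [List.length_append, List.length_singleton]; omega

lemma exists_equiv_isGrowingSeq [Finite α] (hT : T.Connected) {A : Set α} (hA : ConnOn T A) :
    ∃ (n : ℕ) (e : Fin n ≃ α), IsGrowingSeq T e ∧ e '' {j | (j : ℕ) < A.ncard} = A := by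
  classical
  have := Fintype.ofFinite α
  obtain ⟨a, ha⟩ := hA.1
  obtain ⟨M₀, hnd₀, hgrow₀, hA₀⟩ := exists_append_isGrowingSeq (B := A.toFinset)
    (by simpa using hA) [a] (by simp) (by simp)
    (fun i j hij => absurd (Subsingleton.elim (α := Fin 1) i j) hij.ne) (by simpa using ha)
  obtain ⟨M, hnd, hgrow, huniv⟩ := exists_append_isGrowingSeq (B := Finset.univ)
    (by simpa using connOn_univ_iff.2 hT) _ (by simp) hnd₀ hgrow₀ (by simp)
  have hmem : ∀ x, x ∈ [a] ++ M₀ ++ M := by simpa [Finset.ext_iff] using huniv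
  refine ⟨_, hnd.getEquivOfForallMemList _ hmem, hgrow, ?_⟩
  have hcard : A.ncard = ([a] ++ M₀).length := by
    rw [Set.ncard_eq_toFinset_card', ← hA₀, List.toFinset_card_of_nodup hnd₀]
  ext x
  rw [hcard, ← Set.mem_toFinset (s := A), ← hA₀, List.mem_toFinset]
  simp only [Set.mem_image, Set.mem_ofPred_eq, List.Nodup.getEquivOfForallMemList_apply,
    List.get_eq_getElem]
  constructor
  · rintro ⟨j, hj, rfl⟩
    rw [List.getElem_append_left hj]
    exact List.getElem_mem _
  · intro hx
    obtain ⟨j, hj, rfl⟩ := List.getElem_of_mem hx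
    exact ⟨⟨j, by simp only [List.length_append] at hj ⊢; omega⟩, hj, List.getElem_append_left hj⟩

end Trees

def HasRunningIntersection {β : Type*} {K : ℕ} (f : Fin K → Set β) : Prop :=
  ∀ k : Fin K, 0 < (k : ℕ) → ∃ k' < k, prefUnion f k ∩ f k ⊆ f k'

section RunningIntersection

variable {α β : Type*} {T : SimpleGraph α} {c : α → Set β} {n : ℕ}

lemma HasJunctionProperty.hasRunningIntersection (hjun : HasJunctionProperty T c)
    {e : Fin n → α} (he : e.Injective) (hgrow : IsGrowingSeq T e) :
    HasRunningIntersection (c ∘ e) := by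
  classical
  intro j hj
  obtain ⟨i, hij, hadj⟩ := hgrow ⟨0, j.pos⟩ j hj
  refine ⟨i, hij, ?_⟩
  rintro v ⟨⟨j', hj'j, hv'⟩, hv⟩
  obtain ⟨p, hp⟩ := (hgrow.connOn_image (isLowerSet_Iio j) ⟨i, hij⟩).2
    _ ⟨j', hj'j, rfl⟩ _ ⟨i, hij, rfl⟩
  have hej : e j ∉ p.bypass.support := fun h => by
    obtain ⟨x, hxj, hx⟩ := hp _ (p.support_bypass_subset_support h)
    exact lt_irrefl j (he hx ▸ hxj)
  refine hjun _ _ _ (p.bypass_isPath.concat hej hadj.symm) _ ?_ ⟨hv', hv⟩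
  simp [SimpleGraph.Walk.support_concat]

lemma HasRunningIntersection.exists_junctionTree {e : Fin n ≃ α}
    (hrip : HasRunningIntersection (c ∘ e)) (hn : 0 < n) :
    ∃ T : SimpleGraph α, T.IsTree ∧ HasJunctionProperty T c ∧ IsGrowingSeq T e := by
  have : ∀ j : Fin n, ∃ p, 0 < (j : ℕ) → p < j ∧ prefUnion (c ∘ e) j ∩ c (e j) ⊆ c (e p) :=
    fun j => if hj : 0 < (j : ℕ) then (hrip j hj).imp fun _ h _ => h else ⟨j, (absurd · hj)⟩
  choose par hpar using this
  have hlt (j : Fin n) (hj : 0 < (j : ℕ)) : par j < j := (hpar j hj).1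
  have hT := isTree_parentGraph e hn hlt
  refine ⟨parentGraph e par, hT,
    hasJunctionProperty_of_isAcyclic hT.isAcyclic fun v a b ha hb => ?_,
    isGrowingSeq_parentGraph e.injective hlt⟩
  have hS : ConnOn (parentGraph e par) (e '' {j | v ∈ c (e j)}) := by
    refine connOn_image_of_forall_exists_adj e ⟨e.symm a, by simpa using ha⟩ ?_
    intro j hj i hi hij
    have hj0 : 0 < (j : ℕ) := lt_of_le_of_lt (Nat.zero_le _) hij
    exact ⟨par j, (hpar j hj0).2 ⟨⟨i, hij, hi⟩, hj⟩, hlt j hj0,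
      parentGraph_adj e.injective (hlt j hj0)⟩
  obtain ⟨p, hp⟩ := hS.2 a ⟨e.symm a, by simpa using ha, e.apply_symm_apply a⟩
    b ⟨e.symm b, by simpa using hb, e.apply_symm_apply b⟩
  refine ⟨p, fun x hx => ?_⟩
  obtain ⟨j, hj, rfl⟩ := hp x hx
  exact hj

end RunningIntersection

lemma image_eq_iff_eq_preimage_of_injective {α β : Type*} {f : α → β} (hf : f.Injective)
    {s : Set α} {t : Set β} (ht : t ⊆ Set.range f) : f '' s = t ↔ s = f ⁻¹' t :=
  ⟨fun h => h ▸ (Set.preimage_image_eq s hf).symm,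
    fun h => h ▸ Set.image_preimage_eq_of_subset ht⟩

lemma isPerfectSeq_iff {V : Type*} {G : SimpleGraph V} {K : ℕ} {f : Fin K → Set V} :
    IsPerfectSeq G f ↔
      ∃ e : Fin K ≃ {s // IsMaxClique G s}, Subtype.val ∘ e = f ∧ HasRunningIntersection f := by
  constructor
  · rintro ⟨hinj, henum, hrip⟩
    refine ⟨Equiv.ofBijective (fun j => ⟨f j, (henum _).2 ⟨j, rfl⟩⟩)
      ⟨fun i j h => hinj (congrArg Subtype.val h), fun D => ?_⟩, rfl, fun j hj => (hrip j hj).2⟩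
    obtain ⟨j, hj⟩ := (henum D).1 D.2
    exact ⟨j, Subtype.ext hj⟩
  · rintro ⟨e, rfl, hrip⟩
    refine ⟨Subtype.val_injective.comp e.injective,
      fun s => ⟨fun hs => ⟨e.symm ⟨s, hs⟩, by simp⟩, ?_⟩, fun j hj => ⟨?_, hrip j hj⟩⟩
    · rintro ⟨j, rfl⟩
      exact (e j).2
    · exact (e j).2.1.subset Set.inter_subset_right

theorem connected_subtree_iff_prefix_of_perfectSeq_general {V : Type*} [Fintype V]
    (G : SimpleGraph V)
    (k : ℕ) (𝒞 : Set (Set V)) (h𝒞 : ∀ s ∈ 𝒞, IsMaxClique G s)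
    (hcard : 𝒞.ncard = k) (hne : 𝒞.Nonempty) :
    (∃ T : SimpleGraph {s : Set V // IsMaxClique G s},
      IsCliqueTree G T ∧ ConnOn T {D : {s : Set V // IsMaxClique G s} | D.val ∈ 𝒞}) ↔
    (∃ (K : ℕ) (f : Fin K → Set V), IsPerfectSeq G f ∧
      {s : Set V | ∃ j : Fin K, (j : ℕ) < k ∧ f j = s} = 𝒞) := by
  have h𝒞range : 𝒞 ⊆ Set.range (Subtype.val : {s // IsMaxClique G s} → Set V) :=
    fun s hs => ⟨⟨s, h𝒞 s hs⟩, rfl⟩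
  have hprefix {K : ℕ} (e : Fin K ≃ {s // IsMaxClique G s}) :
      {s | ∃ j : Fin K, (j : ℕ) < k ∧ (Subtype.val ∘ e) j = s} = 𝒞 ↔
        e '' {j | (j : ℕ) < k} = {D | D.val ∈ 𝒞} := by
    change (Subtype.val ∘ e) '' {j : Fin K | (j : ℕ) < k} = 𝒞 ↔ _
    rw [Set.image_comp]
    exact image_eq_iff_eq_preimage_of_injective Subtype.val_injective h𝒞range
  constructor
  · rintro ⟨T, ⟨hT, hjun : HasJunctionProperty T Subtype.val⟩, hconn⟩
    obtain ⟨n, e, hgrow, hpre⟩ := exists_equiv_isGrowingSeq hT.connected hconn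
    have hk : {D : {s // IsMaxClique G s} | D.val ∈ 𝒞}.ncard = k :=
      hcard ▸ Set.ncard_preimage_of_injective_subset_range Subtype.val_injective h𝒞range
    rw [hk] at hpre
    exact ⟨n, _, isPerfectSeq_iff.2 ⟨e, rfl, hjun.hasRunningIntersection e.injective hgrow⟩,
      (hprefix e).2 hpre⟩
  · rintro ⟨K, f, hf, hpre⟩
    obtain ⟨e, rfl, hrip⟩ := isPerfectSeq_iff.1 hf
    rw [hprefix e] at hpre
    have hS : {j : Fin K | (j : ℕ) < k}.Nonempty := by
      obtain ⟨s, hs⟩ := hne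
      rw [← Set.image_nonempty (f := e), hpre]
      exact ⟨⟨s, h𝒞 s hs⟩, hs⟩
    obtain ⟨T, hT, hjun, hgrow⟩ := hrip.exists_junctionTree hS.some.pos
    exact ⟨T, ⟨hT, hjun⟩, hpre ▸ hgrow.connOn_image
      ((isLowerSet_Iio k).preimage Fin.val_strictMono.monotone) hS⟩

theorem connected_subtree_iff_prefix_of_perfectSeq {V : Type*} [Fintype V]
    (G : SimpleGraph V) (hconn : G.Connected) (hch : IsChordal G)
    (k : ℕ) (𝒞 : Set (Set V)) (h𝒞 : ∀ s ∈ 𝒞, IsMaxClique G s)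
    (hcard : 𝒞.ncard = k) (hne : 𝒞.Nonempty) :
    (∃ T : SimpleGraph {s : Set V // IsMaxClique G s},
      IsCliqueTree G T ∧ ConnOn T {D : {s : Set V // IsMaxClique G s} | D.val ∈ 𝒞}) ↔
    (∃ (K : ℕ) (f : Fin K → Set V), IsPerfectSeq G f ∧
      {s : Set V | ∃ j : Fin K, (j : ℕ) < k ∧ f j = s} = 𝒞) :=
  connected_subtree_iff_prefix_of_perfectSeq_general G k 𝒞 h𝒞 hcard hne

end Chordal
end
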